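/- Let M, N be h-sets in ℝ² and f : ℝ² → ℝ² a continuous map with a continuous inverse on N. If M f-back-covers N (i.e., N^T f⁻¹-covers M^T), and N g-covers P for some h-set P and continuous g, then there exists z ∈ int M with f(z) ∈ int N and g(f(z)) ∈ P. (Composability of back-covering followed by covering.) -/

import Mathlib

/-!
Read everything in the chart of `N`. The covering `N ⟹g P` makes the first `P`-coordinate of `g`
have opposite signs on the left and right edges of the square, and the back-covering makes the
second `M`-coordinate of `finv` have opposite signs on the bottom and top edges. By the
Poincaré–Miranda theorem both vanish at some `u` in the open square, and the two exit conditions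
then place `cM (finv u')` and `cP (g u')`, `u' = cN⁻¹ u`, in the open squares; take `z = finv u'`.

Poincaré–Miranda is proved by contradiction from a parity count. Label the points of a fine grid
by the signs of `G`; counting mod 2 the edges labelled `{0, 1}` cell by cell, interior edges cancel
and the boundary contributes exactly one, so some cell carries all three labels. If `G` had no zero,
`‖G‖` would be bounded below by some `ε > 0`, and once the mesh is below the uniform-continuity
modulus for `ε` no cell can carry all three labels.
-/

/-- The closed unit square `[-1,1]²`. -/
def unitSquare : Set (ℝ × ℝ) := Set.Icc (-1 : ℝ) 1 ×ˢ Set.Icc (-1 : ℝ) 1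

/-- The open unit square `(-1,1)²`. -/
def openSquare : Set (ℝ × ℝ) := Set.Ioo (-1 : ℝ) 1 ×ˢ Set.Ioo (-1 : ℝ) 1

/-- Covering relation `M ⟹f N` expressed through the homeomorphisms `cM, cN`. -/
def Covers (cM cN : ℝ × ℝ ≃ₜ ℝ × ℝ) (f : ℝ × ℝ → ℝ × ℝ) : Prop :=
  (((∀ y ∈ Set.Icc (-1 : ℝ) 1, (cN (f (cM.symm (-1, y)))).1 < -1) ∧
    (∀ y ∈ Set.Icc (-1 : ℝ) 1, 1 < (cN (f (cM.symm (1, y)))).1)) ∨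
   ((∀ y ∈ Set.Icc (-1 : ℝ) 1, (cN (f (cM.symm (1, y)))).1 < -1) ∧
    (∀ y ∈ Set.Icc (-1 : ℝ) 1, 1 < (cN (f (cM.symm (-1, y)))).1))) ∧
  (∀ p ∈ unitSquare, cN (f (cM.symm p)) ∉ Set.Icc (-1 : ℝ) 1 ×ˢ (Set.Ioo (-1 : ℝ) 1)ᶜ)

/-- Back-covering `M ⟸f N`: the transposed h-set `N^T` is `f⁻¹`-covered onto `M^T`,
where the transposition replaces `c` by `T ∘ c` with `T(x,y) = (y,x)`. -/
def BackCovers (cM cN : ℝ × ℝ ≃ₜ ℝ × ℝ) (finv : ℝ × ℝ → ℝ × ℝ) : Prop :=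
  Covers (cN.trans (Homeomorph.prodComm ℝ ℝ)) (cM.trans (Homeomorph.prodComm ℝ ℝ)) finv

open Finset Set

theorem CharTwo.sum_range_add_add_one {R : Type*} [Ring R] [CharP R 2] (a : ℕ → R) (n : ℕ) :
    ∑ j ∈ range n, (a j + a (j + 1)) = a 0 + a n := by
  simpa only [CharTwo.sub_eq_add, add_comm] using Finset.sum_range_sub a n

theorem CharTwo.sum_grid_eq_boundary {R : Type*} [Ring R] [CharP R 2] (h v : ℕ → ℕ → R)
    (m n : ℕ) :
    ∑ i ∈ range m, ∑ j ∈ range n, (h i j + h i (j + 1) + (v i j + v (i + 1) j)) =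
      ∑ i ∈ range m, (h i 0 + h i n) + ∑ j ∈ range n, (v 0 j + v m j) := by
  rw [sum_congr rfl fun i _ => sum_add_distrib, sum_add_distrib,
    sum_comm (f := fun i j => v i j + v (i + 1) j)]
  exact congrArg₂ (· + ·) (sum_congr rfl fun i _ => CharTwo.sum_range_add_add_one (h i) n)
    (sum_congr rfl fun j _ => CharTwo.sum_range_add_add_one (v · j) m)

def zeroOneEdge (a b : Fin 3) : ZMod 2 := if (a = 0 ∧ b = 1) ∨ (a = 1 ∧ b = 0) then 1 else 0

theorem zeroOneEdge_eq_zero_of_ne_one {a b : Fin 3} (ha : a ≠ 1) (hb : b ≠ 1) :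
    zeroOneEdge a b = 0 := by
  revert a b; decide

theorem zeroOneEdge_eq_zero_of_ne_zero {a b : Fin 3} (ha : a ≠ 0) (hb : b ≠ 0) :
    zeroOneEdge a b = 0 := by
  revert a b; decide

theorem zeroOneEdge_eq_add_of_ne_two {a b : Fin 3} (ha : a ≠ 2) (hb : b ≠ 2) :
    zeroOneEdge a b = (if a = 0 then 0 else 1) + (if b = 0 then 0 else 1) := by
  revert a b; decide

-- A 4-cycle labelled by `0` and `1` only switches between them an even number of times.
theorem exists_eq_of_zeroOneEdge_cycle_ne_zero {a b c d : Fin 3}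
    (h : zeroOneEdge a b + zeroOneEdge d c + (zeroOneEdge a d + zeroOneEdge b c) ≠ 0)
    (k : Fin 3) : a = k ∨ b = k ∨ c = k ∨ d = k := by
  revert a b c d k; decide

theorem exists_cell_forall_label (n : ℕ) (L : ℕ → ℕ → Fin 3)
    (hleft : ∀ j ≤ n, L 0 j = 0) (hright : ∀ j ≤ n, L n j ≠ 0)
    (hbot : ∀ i ≤ n, L i 0 ≠ 2) (htop : ∀ i ≤ n, L i n ≠ 1) :
    ∃ i < n, ∃ j < n, ∀ k : Fin 3, ∃ a ≤ 1, ∃ b ≤ 1, L (i + a) (j + b) = k := by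
  set h : ℕ → ℕ → ZMod 2 := fun i j => zeroOneEdge (L i j) (L (i + 1) j)
  set v : ℕ → ℕ → ZMod 2 := fun i j => zeroOneEdge (L i j) (L i (j + 1))
  have hbottom : ∑ i ∈ range n, h i 0 = 1 := by
    set m : ℕ → ZMod 2 := fun i => if L i 0 = 0 then 0 else 1
    calc ∑ i ∈ range n, h i 0 = ∑ i ∈ range n, (m i + m (i + 1)) :=
          sum_congr rfl fun i hi => zeroOneEdge_eq_add_of_ne_two
            (hbot i (Finset.mem_range.1 hi).le) (hbot (i + 1) (Finset.mem_range.1 hi))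
      _ = 1 := by
        rw [CharTwo.sum_range_add_add_one]
        simp [m, hleft 0 (Nat.zero_le n), hright 0 (Nat.zero_le n)]
  have hboundary :
      ∑ i ∈ range n, (h i 0 + h i n) + ∑ j ∈ range n, (v 0 j + v n j) = 1 := by
    have htop0 : ∀ i ∈ range n, h i n = 0 := fun i hi => by
      simp only [Finset.mem_range] at hi
      exact zeroOneEdge_eq_zero_of_ne_one (htop i hi.le) (htop (i + 1) hi)
    have hsides0 : ∀ j ∈ range n, v 0 j + v n j = 0 := fun j hj => by
      simp only [Finset.mem_range] at hj
      have hv0 : v 0 j = 0 := by simp [v, hleft j hj.le, hleft (j + 1) hj, zeroOneEdge]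
      have hvn : v n j = 0 := zeroOneEdge_eq_zero_of_ne_zero (hright j hj.le) (hright (j + 1) hj)
      rw [hv0, hvn, add_zero]
    rw [sum_eq_zero hsides0, add_zero, sum_add_distrib, sum_eq_zero htop0, add_zero, hbottom]
  rw [← CharTwo.sum_grid_eq_boundary] at hboundary
  obtain ⟨i, hi, hcell⟩ := exists_ne_zero_of_sum_ne_zero (hboundary ▸ one_ne_zero)
  obtain ⟨j, hj, hcell⟩ := exists_ne_zero_of_sum_ne_zero hcell
  refine ⟨i, Finset.mem_range.1 hi, j, Finset.mem_range.1 hj, fun k => ?_⟩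
  rcases exists_eq_of_zeroOneEdge_cycle_ne_zero hcell k with h | h | h | h
  exacts [⟨0, zero_le_one, 0, zero_le_one, h⟩, ⟨1, le_rfl, 0, zero_le_one, h⟩,
    ⟨1, le_rfl, 1, le_rfl, h⟩, ⟨0, zero_le_one, 1, le_rfl, h⟩]

noncomputable def gridCoord (n i : ℕ) : ℝ := -1 + 2 * i / n

theorem gridCoord_zero (n : ℕ) : gridCoord n 0 = -1 := by simp [gridCoord]

theorem gridCoord_self {n : ℕ} (hn : n ≠ 0) : gridCoord n n = 1 := by
  rw [gridCoord, mul_div_assoc, div_self (Nat.cast_ne_zero.2 hn)]; norm_num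

theorem gridCoord_mem_Icc {n i : ℕ} (hi : i ≤ n) : gridCoord n i ∈ Icc (-1 : ℝ) 1 := by
  rcases Nat.eq_zero_or_pos n with rfl | _
  · simp [gridCoord]
  have hfrac : 2 * (i : ℝ) / n ≤ 2 := by
    rw [div_le_iff₀ (by positivity)]
    have : (i : ℝ) ≤ n := by exact_mod_cast hi
    linarith
  constructor <;> simp only [gridCoord] <;> linarith [show 0 ≤ 2 * (i : ℝ) / n by positivity]

theorem dist_gridCoord_add_le (n i : ℕ) {a b : ℕ} (ha : a ≤ 1) (hb : b ≤ 1) :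
    dist (gridCoord n (i + a)) (gridCoord n (i + b)) ≤ 2 / n := by
  have hab : |(a : ℝ) - b| ≤ 1 := by
    have : (a : ℝ) ≤ 1 := by exact_mod_cast ha
    have : (b : ℝ) ≤ 1 := by exact_mod_cast hb
    rw [abs_le]
    constructor <;> linarith [(a.cast_nonneg : (0 : ℝ) ≤ a), (b.cast_nonneg : (0 : ℝ) ≤ b)]
  calc dist (gridCoord n (i + a)) (gridCoord n (i + b)) = 2 / n * |(a : ℝ) - b| := by
        have hdiff : gridCoord n (i + a) - gridCoord n (i + b) = 2 / n * ((a : ℝ) - b) := by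
          simp only [gridCoord]; push_cast; ring
        rw [Real.dist_eq, hdiff, abs_mul, abs_of_nonneg (by positivity)]
    _ ≤ 2 / n := mul_le_of_le_one_right (by positivity) hab

noncomputable def signLabel (v : ℝ × ℝ) : Fin 3 :=
  if v.1 < 0 then 0 else if v.2 < 0 then 1 else 2

theorem signLabel_eq_zero_iff {v : ℝ × ℝ} : signLabel v = 0 ↔ v.1 < 0 := by
  unfold signLabel; split_ifs <;> simp_all

theorem signLabel_eq_one_iff {v : ℝ × ℝ} : signLabel v = 1 ↔ 0 ≤ v.1 ∧ v.2 < 0 := by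
  unfold signLabel; split_ifs <;> simp_all

theorem signLabel_eq_two_iff {v : ℝ × ℝ} : signLabel v = 2 ↔ 0 ≤ v.1 ∧ 0 ≤ v.2 := by
  unfold signLabel; split_ifs <;> simp_all

theorem norm_le_max_dist_of_signLabel {p q r : ℝ × ℝ} (hp : signLabel p = 0)
    (hq : signLabel q = 1) (hr : signLabel r = 2) : ‖q‖ ≤ max (dist p q) (dist q r) := by
  rw [signLabel_eq_zero_iff] at hp
  rw [signLabel_eq_one_iff] at hq
  rw [signLabel_eq_two_iff] at hr
  have h₁ : ‖q.1‖ ≤ dist p q :=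
    calc ‖q.1‖ ≤ dist p.1 q.1 := by
          rw [Real.norm_eq_abs, Real.dist_eq, abs_of_nonneg hq.1, abs_of_neg (by linarith)]
          linarith
      _ ≤ dist p q := by rw [Prod.dist_eq]; exact le_max_left _ _
  have h₂ : ‖q.2‖ ≤ dist q r :=
    calc ‖q.2‖ ≤ dist q.2 r.2 := by
          rw [Real.norm_eq_abs, Real.dist_eq, abs_of_neg hq.2, abs_of_neg (by linarith)]
          linarith
      _ ≤ dist q r := by rw [Prod.dist_eq]; exact le_max_right _ _
  rw [Prod.norm_def]
  exact max_le_max h₁ h₂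

theorem isCompact_unitSquare : IsCompact unitSquare := isCompact_Icc.prod isCompact_Icc

theorem exists_mem_unitSquare_eq_zero_of_edge_signs (G : ℝ × ℝ → ℝ × ℝ)
    (hG : ContinuousOn G unitSquare)
    (hl : ∀ y ∈ Icc (-1 : ℝ) 1, (G (-1, y)).1 < 0)
    (hr : ∀ y ∈ Icc (-1 : ℝ) 1, 0 < (G (1, y)).1)
    (hb : ∀ x ∈ Icc (-1 : ℝ) 1, (G (x, -1)).2 < 0)
    (ht : ∀ x ∈ Icc (-1 : ℝ) 1, 0 < (G (x, 1)).2) :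
    ∃ u ∈ unitSquare, G u = 0 := by
  by_contra! hne
  obtain ⟨u₀, hu₀, hmin⟩ := isCompact_unitSquare.exists_isMinOn
    ⟨(0, 0), by norm_num [unitSquare]⟩ (continuous_norm.comp_continuousOn hG)
  obtain ⟨δ, hδ, hGδ⟩ := Metric.uniformContinuousOn_iff.1
    (isCompact_unitSquare.uniformContinuousOn_of_continuous hG) _ (norm_pos_iff.2 (hne u₀ hu₀))
  obtain ⟨n, hn⟩ := exists_nat_gt (2 / δ)
  have hn0 : 0 < n := by exact_mod_cast (div_pos two_pos hδ).trans hn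
  have hmesh : 2 / (n : ℝ) < δ :=
    (div_lt_iff₀ (by positivity)).2 (by rwa [div_lt_iff₀ hδ, mul_comm] at hn)
  set P : ℕ → ℕ → ℝ × ℝ := fun i j => (gridCoord n i, gridCoord n j)
  obtain ⟨i, hi, j, hj, hlabel⟩ :=
    exists_cell_forall_label n (fun i j => signLabel (G (P i j)))
    (fun j hj => signLabel_eq_zero_iff.2 <| by
      simpa [P, gridCoord_zero] using hl _ (gridCoord_mem_Icc hj))
    (fun j hj => signLabel_eq_zero_iff.not.2 <| not_lt.2 <| le_of_lt <| by
      simpa [P, gridCoord_self hn0.ne'] using hr _ (gridCoord_mem_Icc hj))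
    (fun i hi => signLabel_eq_two_iff.not.2 fun h => h.2.not_gt <| by
      simpa [P, gridCoord_zero] using hb _ (gridCoord_mem_Icc hi))
    (fun i hi => signLabel_eq_one_iff.not.2 fun h => h.2.not_gt <| by
      simpa [P, gridCoord_self hn0.ne'] using ht _ (gridCoord_mem_Icc hi))
  have hcorner : ∀ a ≤ 1, ∀ b ≤ 1, P (i + a) (j + b) ∈ unitSquare := fun a ha b hb =>
    ⟨gridCoord_mem_Icc (by omega), gridCoord_mem_Icc (by omega)⟩
  have hclose : ∀ a ≤ 1, ∀ b ≤ 1, ∀ a' ≤ 1, ∀ b' ≤ 1,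
      dist (G (P (i + a) (j + b))) (G (P (i + a') (j + b'))) < ‖G u₀‖ :=
    fun a ha b hb a' ha' b' hb' => hGδ _ (hcorner a ha b hb) _ (hcorner a' ha' b' hb') <|
      Prod.dist_eq.trans_lt <| max_lt ((dist_gridCoord_add_le n i ha ha').trans_lt hmesh)
        ((dist_gridCoord_add_le n j hb hb').trans_lt hmesh)
  obtain ⟨a₀, ha₀, b₀, hb₀, h₀⟩ := hlabel 0
  obtain ⟨a₁, ha₁, b₁, hb₁, h₁⟩ := hlabel 1
  obtain ⟨a₂, ha₂, b₂, hb₂, h₂⟩ := hlabel 2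
  exact (isMinOn_iff.1 hmin _ (hcorner a₁ ha₁ b₁ hb₁)).not_gt <|
    (norm_le_max_dist_of_signLabel h₀ h₁ h₂).trans_lt <|
      max_lt (hclose a₀ ha₀ b₀ hb₀ a₁ ha₁ b₁ hb₁) (hclose a₁ ha₁ b₁ hb₁ a₂ ha₂ b₂ hb₂)

theorem exists_mem_openSquare_eq_zero_of_edge_signs (G : ℝ × ℝ → ℝ × ℝ)
    (hG : ContinuousOn G unitSquare)
    (hl : ∀ y ∈ Icc (-1 : ℝ) 1, (G (-1, y)).1 < 0)
    (hr : ∀ y ∈ Icc (-1 : ℝ) 1, 0 < (G (1, y)).1)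
    (hb : ∀ x ∈ Icc (-1 : ℝ) 1, (G (x, -1)).2 < 0)
    (ht : ∀ x ∈ Icc (-1 : ℝ) 1, 0 < (G (x, 1)).2) :
    ∃ u ∈ openSquare, G u = 0 := by
  obtain ⟨⟨x, y⟩, ⟨hx, hy⟩, hzero⟩ :=
    exists_mem_unitSquare_eq_zero_of_edge_signs G hG hl hr hb ht
  refine ⟨(x, y), ⟨⟨hx.1.lt_of_ne ?_, hx.2.lt_of_ne ?_⟩, hy.1.lt_of_ne ?_, hy.2.lt_of_ne ?_⟩,
    hzero⟩
  · rintro rfl; simpa [hzero] using hl y hy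
  · rintro rfl; simpa [hzero] using hr y hy
  · rintro rfl; simpa [hzero] using hb x hx
  · rintro rfl; simpa [hzero] using ht x hx

theorem exists_ne_zero_mul_neg_and_mul_pos {α : Type*} {s : Set α} {φ ψ : α → ℝ}
    (h : ((∀ y ∈ s, φ y < -1) ∧ ∀ y ∈ s, 1 < ψ y) ∨
      ((∀ y ∈ s, ψ y < -1) ∧ ∀ y ∈ s, 1 < φ y)) :
    ∃ σ : ℝ, σ ≠ 0 ∧ (∀ y ∈ s, σ * φ y < 0) ∧ ∀ y ∈ s, 0 < σ * ψ y := by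
  rcases h with ⟨hφ, hψ⟩ | ⟨hψ, hφ⟩
  · exact ⟨1, one_ne_zero, fun y hy => by linarith [hφ y hy],
      fun y hy => by linarith [hψ y hy]⟩
  · exact ⟨-1, by norm_num, fun y hy => by linarith [hφ y hy],
      fun y hy => by linarith [hψ y hy]⟩

theorem mem_openSquare_of_fst_eq_zero {p : ℝ × ℝ}
    (hp : p ∉ Icc (-1 : ℝ) 1 ×ˢ (Ioo (-1 : ℝ) 1)ᶜ) (h : p.1 = 0) : p ∈ openSquare := by
  have h₁ : p.1 ∈ Ioo (-1 : ℝ) 1 := by rw [h]; norm_num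
  exact ⟨h₁, not_not.1 fun h₂ => hp ⟨Ioo_subset_Icc_self h₁, h₂⟩⟩

theorem openSquare_subset_unitSquare : openSquare ⊆ unitSquare :=
  prod_mono Ioo_subset_Icc_self Ioo_subset_Icc_self

theorem backcover_then_cover_general
    (N P : Set (ℝ × ℝ)) (cM cN cP : ℝ × ℝ ≃ₜ ℝ × ℝ)
    (hN : cN '' N = unitSquare) (hP : cP '' P = unitSquare)
    (f finv g : ℝ × ℝ → ℝ × ℝ)
    (hg : Continuous g)
    (hfinv : ContinuousOn finv N)
    (hinv₁ : ∀ p ∈ N, f (finv p) = p)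
    (hback : BackCovers cM cN finv) (hcov : Covers cN cP g) :
    ∃ z : ℝ × ℝ, cM z ∈ openSquare ∧ cN (f z) ∈ openSquare ∧ g (f z) ∈ P := by
  obtain ⟨hbEdges, hbExit⟩ := hback
  obtain ⟨hcEdges, hcExit⟩ := hcov
  have hNmem : ∀ u ∈ unitSquare, cN.symm u ∈ N := fun u hu =>
    cN.injective.mem_set_image.1 (by rwa [hN, cN.apply_symm_apply])
  obtain ⟨σ, hσ, hσl, hσr⟩ := exists_ne_zero_mul_neg_and_mul_pos hcEdges
  obtain ⟨τ, hτ, hτb, hτt⟩ := exists_ne_zero_mul_neg_and_mul_pos hbEdges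
  let G : ℝ × ℝ → ℝ × ℝ := fun u =>
    (σ * (cP (g (cN.symm u))).1, τ * (cM (finv (cN.symm u))).2)
  have hG : ContinuousOn G unitSquare :=
    (continuous_const.mul (continuous_fst.comp (cP.continuous.comp
      (hg.comp cN.symm.continuous)))).continuousOn.prodMk
      (continuousOn_const.mul (continuous_snd.comp_continuousOn (cM.continuous.comp_continuousOn
        (hfinv.comp cN.symm.continuous.continuousOn hNmem))))
  obtain ⟨u, hu, hGu⟩ := exists_mem_openSquare_eq_zero_of_edge_signs G hG hσl hσr hτb hτt
  have hu' := openSquare_subset_unitSquare hu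
  have hw : cN.symm u ∈ N := hNmem u hu'
  simp only [G, Prod.ext_iff, Prod.fst_zero, Prod.snd_zero, mul_eq_zero, hσ, hτ, false_or] at hGu
  refine ⟨finv (cN.symm u), ?_, ?_, ?_⟩
  · -- `(cN.trans (Homeomorph.prodComm ℝ ℝ)).symm (u.2, u.1)` is `cN.symm u` by definition
    have h := mem_openSquare_of_fst_eq_zero (hbExit (u.2, u.1) ⟨hu'.2, hu'.1⟩) hGu.2
    exact ⟨h.2, h.1⟩
  · rwa [hinv₁ _ hw, cN.apply_symm_apply]
  · rw [hinv₁ _ hw]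
    exact cP.injective.mem_set_image.1 <| hP ▸ openSquare_subset_unitSquare <|
      mem_openSquare_of_fst_eq_zero (hcExit u hu') hGu.1

/-- if `M` `f`-back-covers `N` (with `f` having a continuous inverse
on `N`) and `N` `g`-covers `P`, then there exists `z ∈ int M` with `f(z) ∈ int N`
and `g(f(z)) ∈ P`. -/
theorem backcover_then_cover
    (M N P : Set (ℝ × ℝ)) (cM cN cP : ℝ × ℝ ≃ₜ ℝ × ℝ)
    (hM : cM '' M = unitSquare) (hN : cN '' N = unitSquare) (hP : cP '' P = unitSquare)
    (f finv g : ℝ × ℝ → ℝ × ℝ)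
    (hf : Continuous f) (hg : Continuous g)
    (hfinv : ContinuousOn finv N)
    (hinv₁ : ∀ p ∈ N, f (finv p) = p)
    (hinv₂ : ∀ p, f p ∈ N → finv (f p) = p)
    (hback : BackCovers cM cN finv) (hcov : Covers cN cP g) :
    ∃ z : ℝ × ℝ, cM z ∈ openSquare ∧ cN (f z) ∈ openSquare ∧ g (f z) ∈ P :=
  backcover_then_cover_general N P cM cN cP hN hP f finv g hg hfinv hinv₁ hback hcov
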